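/- arXiv:2310.07349 — 3 statements merged into one kernel-verified Lean document; each statement's English description precedes it below -/
import Mathlib

section
/- Let ℓ be an odd prime and let B be a number field with [B : ℚ] = ℓ², containing two distinct subfields K and L, each Galois over ℚ with [K : ℚ] = [L : ℚ] = ℓ. Let p be a prime number that is totally ramified in both K and L, say p·O_K = 𝔭₁^ℓ and p·O_L = 𝔭₂^ℓ for prime ideals 𝔭₁ of O_K and 𝔭₂ of O_L. Then the extended ideals coincide: 𝔭₁·O_B = 𝔭₂·O_B. -/
open NumberField

lemma pow_base_inj_ideal {A : Type*} [CommRing A] [IsDedekindDomain A]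
    {I J : Ideal A} {n : ℕ} (hn : n ≠ 0) (hI : I ≠ 0) (hJ : J ≠ 0)
    (h : I ^ n = J ^ n) : I = J := by
  have hJn : J ^ n ≠ 0 := pow_ne_zero _ hJ
  have h1 := congrArg UniqueFactorizationMonoid.normalizedFactors h
  rw [UniqueFactorizationMonoid.normalizedFactors_pow,
    UniqueFactorizationMonoid.normalizedFactors_pow] at h1
  have h2 : UniqueFactorizationMonoid.normalizedFactors I =
      UniqueFactorizationMonoid.normalizedFactors J := by
    classical
    refine Multiset.ext.mpr fun a => ?_
    have := congrArg (Multiset.count a) h1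
    simpa [Multiset.count_nsmul, Nat.mul_left_cancel_iff (Nat.pos_of_ne_zero hn)] using this
  have h3 := UniqueFactorizationMonoid.prod_normalizedFactors hI
  have h4 := UniqueFactorizationMonoid.prod_normalizedFactors hJ
  rw [h2] at h3
  exact associated_iff_eq.mp ((h3.symm).trans h4)

theorem stmt_15 (ℓ : ℕ) (hℓ : ℓ.Prime) (hodd : Odd ℓ)
    (B : Type*) [Field B] [NumberField B]
    (hdegB : Module.finrank ℚ B = ℓ ^ 2)
    (K L : IntermediateField ℚ B) (hKL : K ≠ L)
    [NumberField ↥K] [NumberField ↥L] [IsGalois ℚ ↥K] [IsGalois ℚ ↥L]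
    (hdegK : Module.finrank ℚ ↥K = ℓ) (hdegL : Module.finrank ℚ ↥L = ℓ)
    (p : ℕ) (hp : p.Prime)
    (𝔭₁ : Ideal (𝓞 ↥K)) (𝔭₂ : Ideal (𝓞 ↥L)) (h1 : 𝔭₁.IsPrime) (h2 : 𝔭₂.IsPrime)
    (hr1 : Ideal.span {(p : 𝓞 ↥K)} = 𝔭₁ ^ ℓ)
    (hr2 : Ideal.span {(p : 𝓞 ↥L)} = 𝔭₂ ^ ℓ) :
    Ideal.map (RingOfIntegers.mapRingHom (algebraMap ↥K B)) 𝔭₁ =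
      Ideal.map (RingOfIntegers.mapRingHom (algebraMap ↥L B)) 𝔭₂ := by
  set f := RingOfIntegers.mapRingHom (algebraMap ↥K B)
  set g := RingOfIntegers.mapRingHom (algebraMap ↥L B)
  have hpB : (p : 𝓞 B) ≠ 0 := Nat.cast_ne_zero.mpr hp.ne_zero
  have key : (Ideal.map f 𝔭₁) ^ ℓ = (Ideal.map g 𝔭₂) ^ ℓ := by
    rw [← Ideal.map_pow, ← Ideal.map_pow, ← hr1, ← hr2, Ideal.map_span, Ideal.map_span]
    simp
  have hspan : Ideal.span {(p : 𝓞 B)} ≠ 0 := by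
    simpa [Ideal.span_singleton_eq_bot] using hpB
  have happ : (Ideal.map f 𝔭₁) ^ ℓ = Ideal.span {(p : 𝓞 B)} := by
    rw [← Ideal.map_pow, ← hr1, Ideal.map_span]
    simp
  have hI : Ideal.map f 𝔭₁ ≠ 0 := by
    intro h
    rw [h, zero_pow hℓ.ne_zero] at happ
    exact hspan happ.symm
  have hJ : Ideal.map g 𝔭₂ ≠ 0 := by
    intro h
    rw [h, zero_pow hℓ.ne_zero] at key
    rw [key] at happ
    exact hspan happ.symm
  exact pow_base_inj_ideal hℓ.ne_zero hI hJ key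
end

section
/- Let B be a number field with [B : ℚ] = 9, containing two distinct subfields k and K, each Galois over ℚ with [k : ℚ] = [K : ℚ] = 3. Let p be a prime number totally ramified in both, say p·O_k = 𝔭³ and p·O_K = 𝔮³ for prime ideals 𝔭 of O_k and 𝔮 of O_K, and suppose 𝔮 is a principal ideal of O_K. Then the extended ideal 𝔭·O_B is a principal ideal of O_B (i.e., the class of 𝔭 capitulates in B). -/
/-!
Both extensions `𝔭 O_B` and `𝔮 O_B` have cube `p O_B`. Ideals of the Dedekind domain `O_B` factor
uniquely, so they have unique cube roots; hence `𝔭 O_B = 𝔮 O_B`, which is principal since `𝔮` is.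
-/

open NumberField

theorem Ideal.pow_left_injective_of_isDedekindDomain {R : Type*} [CommRing R] [IsDedekindDomain R]
    {n : ℕ} (hn : n ≠ 0) : Function.Injective fun I : Ideal R ↦ I ^ n := fun _ _ h ↦
  dvd_antisymm ((UniqueFactorizationMonoid.pow_dvd_pow_iff_dvd hn).mp h.dvd)
    ((UniqueFactorizationMonoid.pow_dvd_pow_iff_dvd hn).mp h.symm.dvd)

theorem Ideal.map_pow_eq_span_natCast {R S : Type*} [CommRing R] [CommRing S] (f : R →+* S)
    {I : Ideal R} {n p : ℕ} (h : Ideal.span {(p : R)} = I ^ n) :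
    Ideal.map f I ^ n = Ideal.span {(p : S)} := by
  rw [← Ideal.map_pow, ← h, Ideal.map_span, Set.image_singleton, map_natCast]

theorem stmt_16_general (B : Type*) [Field B] [NumberField B]
    (k K : IntermediateField ℚ B)
    (p : ℕ)
    (𝔭 : Ideal (𝓞 ↥k)) (𝔮 : Ideal (𝓞 ↥K))
    (hr1 : Ideal.span {(p : 𝓞 ↥k)} = 𝔭 ^ 3)
    (hr2 : Ideal.span {(p : 𝓞 ↥K)} = 𝔮 ^ 3)
    (hprin : 𝔮.IsPrincipal) :
    (Ideal.map (RingOfIntegers.mapRingHom (algebraMap ↥k B)) 𝔭).IsPrincipal := by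
  have hcubes :=
    (Ideal.map_pow_eq_span_natCast (RingOfIntegers.mapRingHom (algebraMap k B)) hr1).trans
      (Ideal.map_pow_eq_span_natCast (RingOfIntegers.mapRingHom (algebraMap K B)) hr2).symm
  rw [Ideal.pow_left_injective_of_isDedekindDomain three_ne_zero hcubes]
  exact hprin.map_ringHom _

theorem stmt_16 (B : Type*) [Field B] [NumberField B]
    (hdegB : Module.finrank ℚ B = 9)
    (k K : IntermediateField ℚ B) (hne : k ≠ K)
    [NumberField ↥k] [NumberField ↥K] [IsGalois ℚ ↥k] [IsGalois ℚ ↥K]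
    (hdegk : Module.finrank ℚ ↥k = 3) (hdegK : Module.finrank ℚ ↥K = 3)
    (p : ℕ) (hp : p.Prime)
    (𝔭 : Ideal (𝓞 ↥k)) (𝔮 : Ideal (𝓞 ↥K)) (h1 : 𝔭.IsPrime) (h2 : 𝔮.IsPrime)
    (hr1 : Ideal.span {(p : 𝓞 ↥k)} = 𝔭 ^ 3)
    (hr2 : Ideal.span {(p : 𝓞 ↥K)} = 𝔮 ^ 3)
    (hprin : 𝔮.IsPrincipal) :
    (Ideal.map (RingOfIntegers.mapRingHom (algebraMap ↥k B)) 𝔭).IsPrincipal :=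
  stmt_16_general B k K p 𝔭 𝔮 hr1 hr2 hprin
end

section
/- Let G be a finite group whose order is a power of 3, such that the abelianization G/G′ is isomorphic to (ℤ/3ℤ) × (ℤ/3ℤ). If every maximal subgroup M of G satisfies |M/M′| = 3, then G is isomorphic to (ℤ/3ℤ) × (ℤ/3ℤ); in particular (ℤ/3ℤ) × (ℤ/3ℤ) is the unique finite 3-group G with G/G′ ≅ (3,3) whose four maximal subgroups all have abelianization of order 3. -/
/-!
In a finite `p`-group every maximal subgroup has index `p` and contains the commutator subgroup,
so `G' ≤ Φ(G)`; as `Φ(G)` consists of non-generators, a `p`-group with cyclic abelianization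
is cyclic.
A maximal subgroup `M` with `|M/M'| = 3` is therefore cyclic of order `3`, whence `|G| = 9 = |G/G'|`
and `G ≅ G/G' ≅ C₃ × C₃`.
-/

open Subgroup

theorem isCyclic_of_le_frattini {G : Type*} [Group G] [IsCoatomic (Subgroup G)] {N : Subgroup G}
    [N.Normal] (hN : N ≤ frattini G) [IsCyclic (G ⧸ N)] : IsCyclic G := by
  obtain ⟨g, hg⟩ := IsCyclic.exists_zpow_surjective (G := G ⧸ N)
  obtain ⟨x, rfl⟩ := QuotientGroup.mk_surjective g
  have hsup : zpowers x ⊔ frattini G = ⊤ := by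
    refine eq_top_iff.mpr fun y _ => ?_
    obtain ⟨n, hn⟩ := hg y
    have hy : (x ^ n)⁻¹ * y ∈ N := QuotientGroup.eq.mp (by simpa using hn)
    simpa using mul_mem_sup (zpow_mem_zpowers x n) (hN hy)
  exact ⟨x, fun y => mem_zpowers_iff.mp (frattini_nongenerating hsup ▸ mem_top y)⟩

namespace IsPGroup

variable {p : ℕ} [Fact p.Prime] {G : Type*} [Group G] [Finite G]

theorem index_eq_of_isCoatom (hG : IsPGroup p G) {M : Subgroup G} (hM : IsCoatom M) :
    M.index = p := by
  obtain ⟨k, hk⟩ := (hG.to_subgroup M).exists_card_eq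
  obtain ⟨n, hn⟩ := hG.index M
  have hn0 : n ≠ 0 := by
    rintro rfl
    exact hM.1 (index_eq_one.mp hn)
  have hG_card : Nat.card G = p ^ (k + n) := by rw [← M.card_mul_index, hk, hn, pow_add]
  -- a subgroup of order `p ^ (k + 1)` above `M` must be all of `G`
  obtain ⟨K, hK, hMK⟩ := Sylow.exists_subgroup_card_pow_succ
    (hG_card ▸ pow_dvd_pow p (by omega)) hk
  have hK_top : K = ⊤ := by
    refine hM.2 K (lt_of_le_of_ne hMK ?_)
    rintro rfl
    have := Nat.pow_right_injective (Fact.out : p.Prime).two_le (hk.symm.trans hK)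
    omega
  have := M.card_mul_index
  rw [← card_top (G := G), ← hK_top, hK, hk, pow_succ] at this
  exact Nat.eq_of_mul_eq_mul_left (pow_pos (Fact.out : p.Prime).pos k) this

theorem commutator_le_of_isCoatom (hG : IsPGroup p G) {M : Subgroup G} (hM : IsCoatom M) :
    commutator G ≤ M := by
  have := hG.isNilpotent
  have : M.Normal := Group.normalizerCondition_of_isNilpotent.normal_of_coatom M hM
  have : IsCyclic (G ⧸ M) :=
    isCyclic_of_prime_card (index_eq_card M ▸ hG.index_eq_of_isCoatom hM)
  exact Normal.quotient_commutative_iff_commutator_le.mp inferInstance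

theorem commutator_le_frattini (hG : IsPGroup p G) : commutator G ≤ frattini G :=
  le_iInf₂ fun _ hM => hG.commutator_le_of_isCoatom hM

theorem isCyclic_of_isCyclic_abelianization (hG : IsPGroup p G) [IsCyclic (Abelianization G)] :
    IsCyclic G :=
  have : IsCyclic (G ⧸ commutator G) := ‹IsCyclic (Abelianization G)›
  isCyclic_of_le_frattini hG.commutator_le_frattini

theorem card_eq_sq_of_card_abelianization_eq (hG : IsPGroup p G) {M : Subgroup G}
    (hM : IsCoatom M) (hMab : Nat.card (Abelianization M) = p) : Nat.card G = p ^ 2 := by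
  have : IsCyclic (Abelianization M) := isCyclic_of_prime_card hMab
  have : IsCyclic M := (hG.to_subgroup M).isCyclic_of_isCyclic_abelianization
  let _ : CommGroup M := IsCyclic.commGroup
  rw [← M.card_mul_index, Nat.card_congr Abelianization.equivOfComm.toEquiv, hMab,
    hG.index_eq_of_isCoatom hM, sq]

end IsPGroup

theorem Abelianization.of_bijective_of_card_le {G : Type*} [Group G] [Finite G]
    (h : Nat.card G ≤ Nat.card (Abelianization G)) :
    Function.Bijective (Abelianization.of (G := G)) :=
  (QuotientGroup.mk_surjective).bijective_of_nat_card_le h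

theorem stmt_19 (G : Type*) [Group G] [Finite G] (hG : IsPGroup 3 G)
    (hab : Nonempty (Abelianization G ≃* Multiplicative (ZMod 3) × Multiplicative (ZMod 3)))
    (hmax : ∀ M : Subgroup G, IsCoatom M → Nat.card (Abelianization ↥M) = 3) :
    Nonempty (G ≃* Multiplicative (ZMod 3) × Multiplicative (ZMod 3)) := by
  obtain ⟨e⟩ := hab
  have hab_card : Nat.card (Abelianization G) = 3 ^ 2 := by
    simp [Nat.card_congr e.toEquiv]
  have : Nontrivial (Abelianization G) := e.toEquiv.nontrivial
  have : Nontrivial G := QuotientGroup.mk_surjective.nontrivial (f := Abelianization.of)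
  obtain ⟨M, hM⟩ := IsCoatomic.exists_coatom (Subgroup G)
  have hG_card : Nat.card G = 3 ^ 2 := hG.card_eq_sq_of_card_abelianization_eq hM (hmax M hM)
  have hof := Abelianization.of_bijective_of_card_le (hG_card.trans hab_card.symm).le
  exact ⟨(MulEquiv.ofBijective _ hof).trans e⟩
end
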